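/- The partial order RQ decomposition is unique: if H ∈ ℝ^{d×p} has full row rank and H = R Q = R' Q' are two decompositions where R, R' have nonnegative diagonal and are supported on the partial order (R_{ij} = 0 unless i ⪯ j), and the rows of Q, Q' are unit norm with q_i orthogonal to span{q_j : i ≺ j}, then R = R' and Q = Q'. -/

import Mathlib

/-!
Since `H` has full row rank, so do `R` and `Q`. A matrix supported on a partial order has
determinant equal to the product of its diagonal, so `R` has a positive diagonal. The rows
`qᵢ = q'ᵢ` are then matched by descending induction along the order: if the rows strictly
above `i` agree, `Rᵢᵢ qᵢ - R'ᵢᵢ q'ᵢ` is a combination of those rows and orthogonal to all of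
them, hence zero; comparing norms of the unit rows gives `Rᵢᵢ = R'ᵢᵢ`, so `qᵢ = q'ᵢ`.
Finally `R Q = R' Q` with `Q` of full row rank forces `R = R'`.
-/

open Finset Matrix

theorem Equiv.Perm.eq_one_of_forall_rel {ι : Type*} [Finite ι] {r : ι → ι → Prop}
    [IsPartialOrder ι r] {σ : Equiv.Perm ι} (h : ∀ i, r (σ i) i) : σ = 1 := by
  have hpow : ∀ n i, r ((σ ^ n) i) i := by
    intro n
    induction n with
    | zero => exact fun i => refl i
    | succ n ih => exact fun i => _root_.trans (by rw [pow_succ', mul_apply]; exact h _) (ih i)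
  ext i
  refine antisymm (h i) ?_
  have := hpow (orderOf σ - 1) (σ i)
  rwa [← mul_apply, ← pow_succ, Nat.sub_add_cancel (orderOf_pos σ), pow_orderOf_eq_one] at this

theorem Matrix.det_eq_prod_diag_of_rel {ι R : Type*} [Fintype ι] [DecidableEq ι] [CommRing R]
    {r : ι → ι → Prop} [IsPartialOrder ι r] {M : Matrix ι ι R}
    (hM : ∀ i j, ¬ r i j → M i j = 0) : M.det = ∏ i, M i i := by
  rw [det_apply, sum_eq_single 1 _ (by simp)]
  · simp
  · intro σ _ hσ
    obtain ⟨i, hi⟩ : ∃ i, ¬ r (σ i) i := by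
      by_contra! h
      exact hσ (Equiv.Perm.eq_one_of_forall_rel h)
    rw [prod_eq_zero (f := fun j => M (σ j) j) (mem_univ i) (hM _ _ hi), smul_zero]

section Orthogonality

variable {ι n 𝕜 : Type*} [Fintype n] [CommRing 𝕜] [LinearOrder 𝕜] [IsStrictOrderedRing 𝕜]

theorem eq_zero_of_eq_sum_smul_of_dotProduct_eq_zero {w : n → 𝕜} {s : Finset ι} {c : ι → 𝕜}
    {v : ι → n → 𝕜} (hw : w = ∑ k ∈ s, c k • v k) (h : ∀ k ∈ s, w ⬝ᵥ v k = 0) : w = 0 := by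
  rw [← dotProduct_self_eq_zero]
  nth_rewrite 2 [hw]
  rw [dotProduct_sum]
  exact sum_eq_zero fun k hk => by rw [dotProduct_smul, h k hk, smul_zero]

theorem eq_of_smul_eq_smul_of_dotProduct_self_eq_one {a b : 𝕜} {u v : n → 𝕜} (ha : 0 ≤ a)
    (hb : 0 ≤ b) (hu : u ⬝ᵥ u = 1) (hv : v ⬝ᵥ v = 1) (h : a • u = b • v) : a = b := by
  have := congrArg (fun w => w ⬝ᵥ w) h
  simp only [smul_dotProduct, dotProduct_smul, hu, hv, smul_eq_mul, mul_one] at this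
  exact (mul_self_inj ha hb).mp this

end Orthogonality

theorem Matrix.linearIndependent_row_of_rank_eq_card {m n 𝕜 : Type*} [Fintype m] [Fintype n]
    [Field 𝕜] {A : Matrix m n 𝕜} (hA : A.rank = Fintype.card m) : LinearIndependent 𝕜 A.row := by
  rw [linearIndependent_iff_card_eq_finrank_span, Set.finrank, ← rank_eq_finrank_span_row, hA]

structure IsPartialOrderRQ {ι n 𝕜 : Type*} [Fintype ι] [Fintype n] [CommRing 𝕜]
    [PartialOrder 𝕜] (r : ι → ι → Prop) (H : Matrix ι n 𝕜) (R : Matrix ι ι 𝕜) (Q : Matrix ι n 𝕜) :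
    Prop where
  eq_mul : H = R * Q
  diag_nonneg : ∀ i, 0 ≤ R i i
  apply_eq_zero_of_not_rel : ∀ i j, ¬ r i j → R i j = 0
  row_dotProduct_self : ∀ i, Q i ⬝ᵥ Q i = 1
  row_dotProduct_eq_zero : ∀ i j, r i j → i ≠ j → Q i ⬝ᵥ Q j = 0

namespace IsPartialOrderRQ

variable {ι n 𝕜 : Type*} [Fintype ι] [Fintype n] [Field 𝕜] [LinearOrder 𝕜] {r : ι → ι → Prop}
  {H : Matrix ι n 𝕜} {R R' : Matrix ι ι 𝕜} {Q Q' : Matrix ι n 𝕜}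

theorem linearIndependent_row (h : IsPartialOrderRQ r H R Q) (hH : H.rank = Fintype.card ι) :
    LinearIndependent 𝕜 Q.row := by
  refine linearIndependent_row_of_rank_eq_card (le_antisymm Q.rank_le_card_height ?_)
  rw [← hH, h.eq_mul]
  exact rank_mul_le_right R Q

theorem det_ne_zero [DecidableEq ι] (h : IsPartialOrderRQ r H R Q)
    (hH : H.rank = Fintype.card ι) : R.det ≠ 0 := by
  have hR : R.rank = Fintype.card ι := by
    refine le_antisymm R.rank_le_card_height ?_
    rw [← hH, h.eq_mul]
    exact rank_mul_le_left R Q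
  exact (isUnit_iff_isUnit_det R).mp
    (linearIndependent_rows_iff_isUnit.mp (linearIndependent_row_of_rank_eq_card hR)) |>.ne_zero

theorem diag_pos [DecidableEq ι] [IsPartialOrder ι r] (h : IsPartialOrderRQ r H R Q)
    (hH : H.rank = Fintype.card ι) (i : ι) : 0 < R i i := by
  refine (h.diag_nonneg i).lt_of_ne' ?_
  have := h.det_ne_zero hH
  rw [det_eq_prod_diag_of_rel h.apply_eq_zero_of_not_rel] at this
  exact prod_ne_zero_iff.mp this i (mem_univ i)

theorem row_eq [DecidableEq ι] [DecidableRel r] (h : IsPartialOrderRQ r H R Q) (i : ι) :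
    H i = R i i • Q i + ∑ k with r i k ∧ i ≠ k, R i k • Q k := by
  rw [h.eq_mul, mul_apply_eq_vecMul, vecMul_eq_sum, sum_filter]
  have hsplit : ∀ k, R i k • Q k =
      (if k = i then R i i • Q i else 0) + if r i k ∧ i ≠ k then R i k • Q k else 0 := by
    intro k
    by_cases hk : k = i
    · subst hk; simp
    · by_cases hik : r i k
      · simp [hk, hik, Ne.symm hk]
      · simp [hk, hik, h.apply_eq_zero_of_not_rel i k hik]
  rw [sum_congr rfl fun k _ => hsplit k, sum_add_distrib, sum_ite_eq']
  simp

section StrictOrderedField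

variable [IsStrictOrderedRing 𝕜]

theorem row_eq_of_forall_rel_ne [DecidableEq ι] [DecidableRel r] (h : IsPartialOrderRQ r H R Q)
    (h' : IsPartialOrderRQ r H R' Q') {i : ι} (hi : R i i ≠ 0)
    (hup : ∀ j, r i j → i ≠ j → Q j = Q' j) : Q i = Q' i := by
  have hdiff : R i i • Q i - R' i i • Q' i = ∑ k with r i k ∧ i ≠ k, (R' i k - R i k) • Q k := by
    have hsum : ∑ k with r i k ∧ i ≠ k, R' i k • Q' k = ∑ k with r i k ∧ i ≠ k, R' i k • Q k :=
      sum_congr rfl fun k hk => by rw [hup k (mem_filter.mp hk).2.1 (mem_filter.mp hk).2.2]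
    have hrow := (h.row_eq i).symm.trans (h'.row_eq i)
    rw [hsum] at hrow
    simp only [sub_smul, sum_sub_distrib]
    linear_combination (norm := module) hrow
  have horth : ∀ k ∈ ({k | r i k ∧ i ≠ k} : Finset ι),
      (R i i • Q i - R' i i • Q' i) ⬝ᵥ Q k = 0 := by
    intro k hk
    obtain ⟨hik, hne⟩ := (mem_filter.mp hk).2
    rw [sub_dotProduct, smul_dotProduct, smul_dotProduct, h.row_dotProduct_eq_zero i k hik hne,
      hup k hik hne, h'.row_dotProduct_eq_zero i k hik hne, smul_zero, smul_zero, sub_zero]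
  have hscaled : R i i • Q i = R' i i • Q' i :=
    sub_eq_zero.mp (eq_zero_of_eq_sum_smul_of_dotProduct_eq_zero hdiff horth)
  have hdiag : R i i = R' i i := eq_of_smul_eq_smul_of_dotProduct_self_eq_one (h.diag_nonneg i)
    (h'.diag_nonneg i) (h.row_dotProduct_self i) (h'.row_dotProduct_self i) hscaled
  rw [← hdiag] at hscaled
  exact smul_right_injective _ hi hscaled

theorem unique [IsPartialOrder ι r] (h : IsPartialOrderRQ r H R Q)
    (h' : IsPartialOrderRQ r H R' Q') (hH : H.rank = Fintype.card ι) : R = R' ∧ Q = Q' := by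
  classical
  have hQ : Q = Q' := by
    -- `r` as an order on `ι`: finiteness then gives induction downwards from maximal elements
    let _ : PartialOrder ι :=
      { le := r, le_refl := refl_of r, le_trans := fun _ _ _ => trans_of r,
        le_antisymm := fun _ _ => antisymm_of r }
    funext i
    induction i using WellFoundedGT.induction with
    | _ i ih =>
      exact h.row_eq_of_forall_rel_ne h' (h.diag_pos hH i).ne' fun j hij hne =>
        ih j (lt_of_le_of_ne hij hne)
  subst hQ
  refine ⟨funext fun i => vecMul_injective_iff.mpr (h.linearIndependent_row hH) ?_, rfl⟩
  exact congrFun (h.eq_mul.symm.trans h'.eq_mul) i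

end StrictOrderedField

end IsPartialOrderRQ

/-- Uniqueness of the partial order RQ decomposition: if `H ∈ ℝ^{d×p}` has full
row rank and `H = R Q = R' Q'` are two decompositions where `R, R'` have
nonnegative diagonal and are supported on the partial order, and the rows of
`Q, Q'` are unit norm with `qᵢ` orthogonal to every `qⱼ` with `i ≺ j`, then
`R = R'` and `Q = Q'`. -/
theorem stmt7 (d p : ℕ) (H : Matrix (Fin d) (Fin p) ℝ) (hH : H.rank = d)
    (r : Fin d → Fin d → Prop) (hr : IsPartialOrder (Fin d) r)
    (R R' : Matrix (Fin d) (Fin d) ℝ) (Q Q' : Matrix (Fin d) (Fin p) ℝ)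
    (hRQ : H = R * Q) (hRQ' : H = R' * Q')
    (hRdiag : ∀ i, 0 ≤ R i i) (hRdiag' : ∀ i, 0 ≤ R' i i)
    (hRsupp : ∀ i j, ¬ r i j → R i j = 0)
    (hRsupp' : ∀ i j, ¬ r i j → R' i j = 0)
    (hQnorm : ∀ i, ∑ x, Q i x ^ 2 = 1)
    (hQnorm' : ∀ i, ∑ x, Q' i x ^ 2 = 1)
    (hQorth : ∀ i j, r i j → i ≠ j → ∑ x, Q i x * Q j x = 0)
    (hQorth' : ∀ i j, r i j → i ≠ j → ∑ x, Q' i x * Q' j x = 0) :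
    R = R' ∧ Q = Q' := by
  have hdot (Q : Matrix (Fin d) (Fin p) ℝ) (i : Fin d) : Q i ⬝ᵥ Q i = ∑ x, Q i x ^ 2 := by
    simp only [dotProduct, sq]
  exact IsPartialOrderRQ.unique
    ⟨hRQ, hRdiag, hRsupp, fun i => (hdot Q i).trans (hQnorm i), hQorth⟩
    ⟨hRQ', hRdiag', hRsupp', fun i => (hdot Q' i).trans (hQnorm' i), hQorth'⟩
    (by rw [hH, Fintype.card_fin])
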